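/- Let E training environments be observed with σ_e² = 1 for all e, and for ε > 1 let Φ_ε be the featurizer that outputs [z_c, 0] when z_e lies in the union ℬ_r of the 2E balls of radius √(ε d_e) centered at ±μ_e (e ∈ ℰ) and outputs [z_c, z_e] otherwise. Then with β̂ = [β_c, β_{e;ERM}, β_0], the predictor (Φ_ε, β̂) exactly matches the optimal invariant predictor on at least a 1 − p_ε fraction of the training distribution of each environment, where p_ε := exp{−d_e·min(ε−1, (ε−1)²)/8}, and matches the ERM-optimal solution on the remaining inputs. -/

import Mathlib

/-!
By construction `Φ_ε` zeroes out `z_e` exactly on the union of balls `ℬ`, so the predictor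
agrees with the invariant one on `ℬ` and with the ERM one off `ℬ`. For each environment
and label `y`, the union `ℬ` contains the ball of squared radius `ε d_e` around the mean
`y μ_e` of `z_e`, so it remains to bound the chi-squared tail
`P(‖z_e - y μ_e‖² > ε d_e) ≤ p_ε`. This is a Chernoff bound: the moment generating
function of `‖z_e - y μ_e‖²` at `t` is `(1 - 2t)^{-d_e/2}`, and `t = (ε - 1) / (2ε)` gives
`P ≤ exp(-d_e (ε - 1 - log ε) / 2)`, which is at most `p_ε` because
`min(ε - 1, (ε - 1)²) ≤ 4 (ε - 1 - log ε)`.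
-/

open MeasureTheory Real Matrix
open scoped NNReal ENNReal BigOperators

noncomputable section

/-- Isotropic Gaussian measure on `ℝ^d`, as a product of one-dimensional Gaussians. -/
def gaussPi {d : ℕ} (μ : Fin d → ℝ) (v : ℝ≥0) : Measure (Fin d → ℝ) :=
  Measure.pi fun i => ProbabilityTheory.gaussianReal (μ i) v

/-- The latent space: invariant features paired with environmental features. -/
abbrev Latent (dc de : ℕ) := (Fin dc → ℝ) × (Fin de → ℝ)

/-- Joint law of the latent features `(z_c, z_e)` given the label `y ∈ {±1}`:
`z_c ~ N(y μ_c, σ_c² I)` independent of `z_e ~ N(y μ_e, σ_e² I)`. -/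
def latentLaw {dc de : ℕ} (μc : Fin dc → ℝ) (vc : ℝ≥0) (μe : Fin de → ℝ) (ve : ℝ≥0)
    (y : ℝ) : Measure (Latent dc de) :=
  (gaussPi (fun j => y * μc j) vc).prod (gaussPi (fun j => y * μe j) ve)

/-- Logistic loss `ℓ(σ(t), y) = log(1 + exp(-y t))` for `y ∈ {±1}` and logit `t`. -/
def logLoss (y t : ℝ) : ℝ := Real.log (1 + Real.exp (-(y * t)))

/-- Logistic risk of a logit function `g` of the latent features, on the environment with
environmental mean `μe` and variance `ve` (label `y = 1` has probability `η`). -/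
def lRisk {dc de : ℕ} (η : ℝ) (μc : Fin dc → ℝ) (vc : ℝ≥0) (μe : Fin de → ℝ) (ve : ℝ≥0)
    (g : Latent dc de → ℝ) : ℝ :=
  η * ∫ z, logLoss 1 (g z) ∂(latentLaw μc vc μe ve 1)
    + (1 - η) * ∫ z, logLoss (-1) (g z) ∂(latentLaw μc vc μe ve (-1))

/-- 0-1 risk of the sign classifier induced by the logit function `g`. -/
def zoRisk {dc de : ℕ} (η : ℝ) (μc : Fin dc → ℝ) (vc : ℝ≥0) (μe : Fin de → ℝ) (ve : ℝ≥0)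
    (g : Latent dc de → ℝ) : ℝ :=
  η * ((latentLaw μc vc μe ve 1) {z | g z ≤ 0}).toReal
    + (1 - η) * ((latentLaw μc vc μe ve (-1)) {z | 0 ≤ g z}).toReal

/-- Logit of the optimal invariant predictor: `β_cᵀ z_c + β₀` with
`β_c = 2 μ_c / σ_c²` and `β₀ = log (η / (1-η))`. -/
def invLogit {dc de : ℕ} (η : ℝ) (μc : Fin dc → ℝ) (vc : ℝ≥0) (z : Latent dc de) : ℝ :=
  (∑ j, (2 * μc j / (vc : ℝ)) * z.1 j) + Real.log (η / (1 - η))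

/-- Logit of a linear featurizer `Φ(f(z_c, z_e)) = A z_c + B z_e` composed with the
linear classifier `(β, b)` (`b` is the bias/intercept). -/
def linLogit {k dc de : ℕ} (A : Matrix (Fin k) (Fin dc) ℝ) (B : Matrix (Fin k) (Fin de) ℝ)
    (β : Fin k → ℝ) (b : ℝ) (z : Latent dc de) : ℝ :=
  β ⬝ᵥ (A *ᵥ z.1 + B *ᵥ z.2) + b

/-- A classifier over features living in the latent space, together with a bias term. -/
abbrev Cls (dc de : ℕ) := (Fin dc → ℝ) × (Fin de → ℝ) × ℝ

/-- Logit of a (possibly non-linear) featurizer `Φ` valued in the latent space,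
composed with the classifier `w = (β_c-part, β_e-part, bias)`. -/
def featLogit {dc de : ℕ} (Φ : Latent dc de → Latent dc de) (w : Cls dc de)
    (z : Latent dc de) : ℝ :=
  w.1 ⬝ᵥ (Φ z).1 + w.2.1 ⬝ᵥ (Φ z).2 + w.2.2

/-- Squared Euclidean norm of the gradient of `F : Cls dc de → ℝ` at `w`,
written coordinatewise via directional derivatives. -/
def gradSq {dc de : ℕ} (F : Cls dc de → ℝ) (w : Cls dc de) : ℝ :=
  (∑ i, (fderiv ℝ F w (Pi.single i 1, 0, 0)) ^ 2)
    + (∑ j, (fderiv ℝ F w ((0 : Fin dc → ℝ), Pi.single j 1, 0)) ^ 2)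
    + (fderiv ℝ F w ((0 : Fin dc → ℝ), (0 : Fin de → ℝ), 1)) ^ 2

/-- Union over the environments of the two Euclidean balls of squared radius `r2 i`
centered at `μ i` and `-μ i`. -/
def ballUnion {de E : ℕ} (μ : Fin E → Fin de → ℝ) (r2 : Fin E → ℝ) : Set (Fin de → ℝ) :=
  {x | ∃ i, (∑ j, (x j - μ i j) ^ 2) ≤ r2 i ∨ (∑ j, (x j + μ i j) ^ 2) ≤ r2 i}

/-- The featurizer `Φ_ε`: it outputs `(z_c, 0)` when `z_e` lies in the union of balls `ℬ`,
and `(z_c, z_e)` otherwise. -/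
def PhiEps {dc de E : ℕ} (μ : Fin E → Fin de → ℝ) (r2 : Fin E → ℝ) (z : Latent dc de) :
    Latent dc de :=
  (z.1, (ballUnion μ r2)ᶜ.indicator id z.2)

open ProbabilityTheory

/-- For `t * v ≥ 1 / 2` both sides are junk `0`: the integrand is not integrable and the
square root is `0`. -/
lemma integral_exp_mul_sq_sub_gaussianReal (m : ℝ) {v : NNReal} (hv : v ≠ 0) (t : ℝ) :
    ∫ x, exp (t * (x - m) ^ 2) ∂gaussianReal m v = (√(1 - 2 * t * v))⁻¹ := by
  have hv0 : (0 : ℝ) < v := by positivity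
  calc ∫ x, exp (t * (x - m) ^ 2) ∂gaussianReal m v
      = ∫ x, (√(2 * π * v))⁻¹ * exp (-(1 / (2 * v) - t) * (x - m) ^ 2) := by
        rw [integral_gaussianReal_eq_integral_smul hv]
        refine integral_congr_ae (ae_of_all _ fun x => ?_)
        simp only [gaussianPDFReal_def, smul_eq_mul]
        rw [mul_assoc, ← exp_add]
        congr 2
        field_simp
        ring
    _ = (√(2 * π * v))⁻¹ * √(π / (1 / (2 * v) - t)) := by
        rw [integral_const_mul,
          integral_sub_right_eq_self (fun x => exp (-(1 / (2 * v) - t) * x ^ 2)), integral_gaussian]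
    _ = (√(1 - 2 * t * v))⁻¹ := by
        rw [← sqrt_inv, ← sqrt_inv, ← sqrt_mul (by positivity)]
        congr 1
        field_simp

lemma integral_exp_mul_sum_sq_sub_pi_gaussianReal {ι : Type*} [Fintype ι] (m : ι → ℝ)
    {v : NNReal} (hv : v ≠ 0) (t : ℝ) :
    ∫ x, exp (t * ∑ i, (x i - m i) ^ 2) ∂Measure.pi (fun i => gaussianReal (m i) v)
      = (√(1 - 2 * t * v))⁻¹ ^ Fintype.card ι := by
  simp_rw [Finset.mul_sum, exp_sum]
  rw [integral_fintype_prod_eq_prod (fun i x => exp (t * (x - m i) ^ 2))]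
  simp_rw [integral_exp_mul_sq_sub_gaussianReal _ hv t]
  rw [Finset.prod_const, Finset.card_univ]

lemma integrable_exp_mul_sum_sq_sub_pi_gaussianReal {ι : Type*} [Fintype ι] (m : ι → ℝ)
    {v : NNReal} (hv : v ≠ 0) {t : ℝ} (ht : t * v < 1 / 2) :
    Integrable (fun x => exp (t * ∑ i, (x i - m i) ^ 2))
      (Measure.pi (fun i => gaussianReal (m i) v)) := by
  refine .of_integral_ne_zero ?_
  rw [integral_exp_mul_sum_sq_sub_pi_gaussianReal m hv t]
  have : 0 < 1 - 2 * t * v := by linarith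
  positivity

lemma min_sub_one_sq_le_four_mul_sub_one_sub_log {ε : ℝ} (hε : 1 < ε) :
    min (ε - 1) ((ε - 1) ^ 2) ≤ 4 * (ε - 1 - log ε) := by
  rcases le_or_gt ε 2 with h2 | h2
  · -- `log (1 + u) ≤ u - u² / 4` on `[0, 1]`
    set u := ε - 1
    have hv : 0 ≤ u - u ^ 2 / 4 := by nlinarith
    have hlog : log ε ≤ u - u ^ 2 / 4 := by
      rw [log_le_iff_le_exp (by linarith)]
      nlinarith [quadratic_le_exp_of_nonneg hv]
    linarith [min_le_right u (u ^ 2)]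
  · -- `log ε ≤ ε / 2 - 1 + log 2` from `log (ε / 2) ≤ ε / 2 - 1`
    have hlog : log ε ≤ ε / 2 - 1 + log 2 := by
      have h := log_le_sub_one_of_pos (x := ε / 2) (by linarith)
      rw [log_div (by linarith) (by norm_num)] at h
      linarith
    nlinarith [log_two_lt_d9, min_le_left (ε - 1) ((ε - 1) ^ 2)]

lemma pi_gaussianReal_real_sum_sq_sub_ge_le {ι : Type*} [Fintype ι] (m : ι → ℝ) {ε : ℝ}
    (hε : 1 < ε) :
    (Measure.pi fun i => gaussianReal (m i) 1).real
        {x | ε * Fintype.card ι ≤ ∑ i, (x i - m i) ^ 2}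
      ≤ exp (-(Fintype.card ι * min (ε - 1) ((ε - 1) ^ 2)) / 8) := by
  set d : ℝ := (Fintype.card ι : ℝ)
  set t : ℝ := (ε - 1) / (2 * ε)
  have hε0 : 0 < ε := by linarith
  have ht0 : 0 ≤ t := div_nonneg (by linarith) (by positivity)
  have h1 : 1 - 2 * t * (1 : NNReal) = ε⁻¹ := by
    simp only [NNReal.coe_one, mul_one, t]; field_simp; ring
  have ht : t * (1 : NNReal) < 1 / 2 := by
    have : 0 < ε⁻¹ := by positivity
    linarith
  refine (measure_ge_le_exp_mul_mgf _ ht0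
    (integrable_exp_mul_sum_sq_sub_pi_gaussianReal m one_ne_zero ht)).trans ?_
  rw [mgf, integral_exp_mul_sum_sq_sub_pi_gaussianReal m one_ne_zero t, h1]
  have hsq : (√ε⁻¹)⁻¹ = exp (log ε / 2) := by
    rw [sqrt_inv, inv_inv, ← log_sqrt hε0.le, exp_log (sqrt_pos.2 hε0)]
  rw [hsq, ← exp_nat_mul, ← exp_add, exp_le_exp]
  have htε : t * (ε * d) = (ε - 1) / 2 * d := by
    simp only [t]; field_simp
  have hd : (0 : ℝ) ≤ d := Nat.cast_nonneg _
  nlinarith [mul_le_mul_of_nonneg_left (min_sub_one_sq_le_four_mul_sub_one_sub_log hε) hd]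

lemma ofReal_one_sub_le_pi_gaussianReal_sum_sq_sub_le {ι : Type*} [Fintype ι] (m : ι → ℝ)
    {ε : ℝ} (hε : 1 < ε) :
    ENNReal.ofReal (1 - exp (-(Fintype.card ι * min (ε - 1) ((ε - 1) ^ 2)) / 8))
      ≤ (Measure.pi fun i => gaussianReal (m i) 1)
          {x | ∑ i, (x i - m i) ^ 2 ≤ ε * Fintype.card ι} := by
  set P := Measure.pi fun i => gaussianReal (m i) 1
  set T := {x : ι → ℝ | ∑ i, (x i - m i) ^ 2 ≤ ε * Fintype.card ι}
  have hT : MeasurableSet T := measurableSet_le (by fun_prop) measurable_const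
  have hTc : P.real Tᶜ ≤ exp (-(Fintype.card ι * min (ε - 1) ((ε - 1) ^ 2)) / 8) := by
    refine le_trans (measureReal_mono fun x hx => ?_)
      (pi_gaussianReal_real_sum_sq_sub_ge_le m hε)
    simp only [T, Set.mem_compl_iff, Set.mem_ofPred_eq, not_le] at hx
    exact hx.le
  have hT1 : P.real T = 1 - P.real Tᶜ := by
    rw [measureReal_compl hT, probReal_univ, sub_sub_cancel]
  rw [← ofReal_measureReal (measure_ne_top P T), hT1]
  exact ENNReal.ofReal_le_ofReal (by linarith)

lemma mem_ballUnion_of_sum_sq_sub_le {de E : ℕ} {μ : Fin E → Fin de → ℝ} {r2 : Fin E → ℝ}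
    {x : Fin de → ℝ} (i : Fin E) {y : ℝ} (hy : y = 1 ∨ y = -1)
    (hx : ∑ j, (x j - y * μ i j) ^ 2 ≤ r2 i) : x ∈ ballUnion μ r2 := by
  refine ⟨i, ?_⟩
  rcases hy with rfl | rfl
  · left; simpa using hx
  · right; simpa using hx

lemma ofReal_one_sub_le_latentLaw_ballUnion {dc de E : ℕ} (μc : Fin dc → ℝ) (vc : NNReal)
    (μ : Fin E → Fin de → ℝ) (i : Fin E) {y : ℝ} (hy : y = 1 ∨ y = -1) {ε : ℝ} (hε : 1 < ε) :
    ENNReal.ofReal (1 - exp (-(de * min (ε - 1) ((ε - 1) ^ 2)) / 8))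
      ≤ latentLaw μc vc (μ i) 1 y {z | z.2 ∈ ballUnion μ (fun _ => ε * de)} := by
  have hprod : {z : Latent dc de | z.2 ∈ ballUnion μ (fun _ => ε * de)}
      = Set.univ ×ˢ ballUnion μ (fun _ => ε * de) := by
    ext z; simp
  simp only [hprod, latentLaw, gaussPi]
  rw [Measure.prod_prod, measure_univ, one_mul]
  calc ENNReal.ofReal (1 - exp (-(de * min (ε - 1) ((ε - 1) ^ 2)) / 8))
      ≤ (Measure.pi fun j => gaussianReal (y * μ i j) 1)
          {x | ∑ j, (x j - y * μ i j) ^ 2 ≤ ε * de} := by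
        simpa using ofReal_one_sub_le_pi_gaussianReal_sum_sq_sub_le (fun j => y * μ i j) hε
    _ ≤ _ := measure_mono fun x hx => mem_ballUnion_of_sum_sq_sub_le i hy hx

lemma featLogit_PhiEps_of_mem {dc de E : ℕ} {μ : Fin E → Fin de → ℝ} {r2 : Fin E → ℝ}
    (w : Cls dc de) {z : Latent dc de} (hz : z.2 ∈ ballUnion μ r2) :
    featLogit (PhiEps μ r2) w z = w.1 ⬝ᵥ z.1 + w.2.2 := by
  simp [featLogit, PhiEps, hz]

lemma featLogit_PhiEps_of_notMem {dc de E : ℕ} {μ : Fin E → Fin de → ℝ} {r2 : Fin E → ℝ}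
    (w : Cls dc de) {z : Latent dc de} (hz : z.2 ∉ ballUnion μ r2) :
    featLogit (PhiEps μ r2) w z = w.1 ⬝ᵥ z.1 + w.2.1 ⬝ᵥ z.2 + w.2.2 := by
  simp [featLogit, PhiEps, hz]

lemma invLogit_eq_dotProduct {dc de : ℕ} (η : ℝ) (μc : Fin dc → ℝ) (vc : NNReal)
    (z : Latent dc de) :
    invLogit η μc vc z = (fun j => 2 * μc j / (vc : ℝ)) ⬝ᵥ z.1 + log (η / (1 - η)) :=
  rfl

theorem stmt6_general
    (dc de E : ℕ) (ε : ℝ) (hε : 1 < ε) (η : ℝ)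
    (μc : Fin dc → ℝ) (vc : ℝ≥0) (μ : Fin E → Fin de → ℝ) (βe : Fin de → ℝ) :
    -- on at least a 1 - p_ε fraction of each training environment, the predictor
    -- coincides with the optimal invariant predictor
    (∀ (i : Fin E) (y : ℝ), y = 1 ∨ y = -1 →
      ENNReal.ofReal (1 - Real.exp (-(de * min (ε - 1) ((ε - 1) ^ 2)) / 8))
        ≤ (latentLaw μc vc (μ i) 1 y)
            {z | featLogit (PhiEps μ (fun _ => ε * de) (E := E)) 
                (fun j => 2 * μc j / (vc : ℝ), βe, Real.log (η / (1 - η))) z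
              = invLogit η μc vc z}) ∧
    -- inside the union of balls it matches the optimal invariant predictor pointwise
    (∀ z : Latent dc de, z.2 ∈ ballUnion μ (fun _ => ε * de) →
      featLogit (PhiEps μ (fun _ => ε * de))
          (fun j => 2 * μc j / (vc : ℝ), βe, Real.log (η / (1 - η))) z
        = invLogit η μc vc z) ∧
    -- on the remaining inputs it matches the ERM-optimal predictor
    (∀ z : Latent dc de, z.2 ∉ ballUnion μ (fun _ => ε * de) →
      featLogit (PhiEps μ (fun _ => ε * de))
          (fun j => 2 * μc j / (vc : ℝ), βe, Real.log (η / (1 - η))) z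
        = (fun j => 2 * μc j / (vc : ℝ)) ⬝ᵥ z.1 + βe ⬝ᵥ z.2 + Real.log (η / (1 - η))) := by
  have hin : ∀ z : Latent dc de, z.2 ∈ ballUnion μ (fun _ => ε * de) →
      featLogit (PhiEps μ (fun _ => ε * de))
          (fun j => 2 * μc j / (vc : ℝ), βe, Real.log (η / (1 - η))) z
        = invLogit η μc vc z := fun z hz => by
    rw [featLogit_PhiEps_of_mem _ hz, invLogit_eq_dotProduct]
  refine ⟨fun i y hy => ?_, hin, fun z hz => featLogit_PhiEps_of_notMem _ hz⟩
  exact (ofReal_one_sub_le_latentLaw_ballUnion μc vc μ i hy hε).trans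
    (measure_mono fun z hz => hin z hz)

/-- Theorem 3, part 2: with unit environmental variances and `ε > 1`,
the featurizer `Φ_ε` (built from the union of the `2E` balls of radius `√(ε d_e)` around
`±μ_e`) together with the classifier `β̂ = [β_c, β_{e;ERM}, β₀]` exactly matches the
optimal invariant predictor on at least a `1 - p_ε` fraction of each training
environment, where `p_ε = exp(-d_e min(ε-1,(ε-1)²)/8)`, and matches the ERM-optimal
predictor on the remaining inputs. -/
theorem stmt6
    (dc de E : ℕ) (hE : 0 < E) (ε : ℝ) (hε : 1 < ε)
    (η : ℝ) (hη0 : 0 < η) (hη1 : η < 1)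
    (μc : Fin dc → ℝ) (vc : ℝ≥0) (hvc : 0 < vc)
    (μ : Fin E → Fin de → ℝ) (βe : Fin de → ℝ)
    -- β_{e;ERM} minimizes the average training logistic risk on the full features
    (hERM : ∀ βe' : Fin de → ℝ,
      (1 / (E : ℝ)) * ∑ i, lRisk η μc vc (μ i) 1
          (fun z => (fun j => 2 * μc j / (vc : ℝ)) ⬝ᵥ z.1 + βe ⬝ᵥ z.2
            + Real.log (η / (1 - η)))
        ≤ (1 / (E : ℝ)) * ∑ i, lRisk η μc vc (μ i) 1
            (fun z => (fun j => 2 * μc j / (vc : ℝ)) ⬝ᵥ z.1 + βe' ⬝ᵥ z.2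
              + Real.log (η / (1 - η)))) :
    -- on at least a 1 - p_ε fraction of each training environment, the predictor
    -- coincides with the optimal invariant predictor
    (∀ (i : Fin E) (y : ℝ), y = 1 ∨ y = -1 →
      ENNReal.ofReal (1 - Real.exp (-(de * min (ε - 1) ((ε - 1) ^ 2)) / 8))
        ≤ (latentLaw μc vc (μ i) 1 y)
            {z | featLogit (PhiEps μ (fun _ => ε * de) (E := E)) 
                (fun j => 2 * μc j / (vc : ℝ), βe, Real.log (η / (1 - η))) z
              = invLogit η μc vc z}) ∧
    -- inside the union of balls it matches the optimal invariant predictor pointwise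
    (∀ z : Latent dc de, z.2 ∈ ballUnion μ (fun _ => ε * de) →
      featLogit (PhiEps μ (fun _ => ε * de))
          (fun j => 2 * μc j / (vc : ℝ), βe, Real.log (η / (1 - η))) z
        = invLogit η μc vc z) ∧
    -- on the remaining inputs it matches the ERM-optimal predictor
    (∀ z : Latent dc de, z.2 ∉ ballUnion μ (fun _ => ε * de) →
      featLogit (PhiEps μ (fun _ => ε * de))
          (fun j => 2 * μc j / (vc : ℝ), βe, Real.log (η / (1 - η))) z
        = (fun j => 2 * μc j / (vc : ℝ)) ⬝ᵥ z.1 + βe ⬝ᵥ z.2 + Real.log (η / (1 - η))) :=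
  stmt6_general dc de E ε hε η μc vc μ βe
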